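/- Every graph automorphism ψ of the replacement graph Γ(S) maps V(S) onto itself, its restriction to V(S) is an automorphism of the I-system S, and ψ is completely determined by this restriction; moreover, the restriction map is a group isomorphism Aut(Γ(S)) ≅ Aut_I(S). -/

import Mathlib

/-- The automorphism group of a binary relational system `R` over a label set `I`,
as a subgroup of the permutations of the vertex set. -/
def relAut {I V : Type*} (R : I → V → V → Prop) : Subgroup (Equiv.Perm V) where
  carrier := {e | ∀ i v w, R i v w ↔ R i (e v) (e w)}
  one_mem' := by intro i v w; simp
  mul_mem' := by
    intro a b ha hb i v w
    simpa [Equiv.Perm.mul_apply] using (hb i v w).trans (ha i (b v) (b w))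
  inv_mem' := by
    intro a ha i v w
    simpa [Equiv.Perm.coe_inv, Equiv.apply_symm_apply] using (ha i (a⁻¹ v) (a⁻¹ w)).symm

/-- The automorphism group of a morphism of binary relational systems, i.e. the subgroup of
`Aut(R₁) × Aut(R₂)` of pairs commuting with `f`. -/
def relArrowAut {I V₁ V₂ : Type*} (R₁ : I → V₁ → V₁ → Prop) (R₂ : I → V₂ → V₂ → Prop)
    (f : V₁ → V₂) : Subgroup (relAut R₁ × relAut R₂) where
  carrier := {p | ∀ v, f ((p.1 : Equiv.Perm V₁) v) = (p.2 : Equiv.Perm V₂) (f v)}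
  one_mem' := by intro v; simp
  mul_mem' := by
    intro a b ha hb v
    simp only [Prod.fst_mul, Prod.snd_mul, Subgroup.coe_mul, Equiv.Perm.mul_apply]
    rw [ha ((b.1 : Equiv.Perm V₁) v), hb v]
  inv_mem' := by
    intro a ha v
    simp only [Prod.fst_inv, Prod.snd_inv, Subgroup.coe_inv]
    have h := ha ((a.1 : Equiv.Perm V₁)⁻¹ v)
    simp only [Equiv.Perm.coe_inv, Equiv.apply_symm_apply] at h
    rw [h]
    simp only [Equiv.Perm.coe_inv, Equiv.symm_apply_apply]

/-- The automorphism group of a simple graph, as a subgroup of the permutations of the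
vertex set. -/
def graphAut {V : Type*} (G : SimpleGraph V) : Subgroup (Equiv.Perm V) where
  carrier := {e | ∀ v w, G.Adj v w ↔ G.Adj (e v) (e w)}
  one_mem' := by intro v w; simp
  mul_mem' := by
    intro a b ha hb v w
    simpa [Equiv.Perm.mul_apply] using (hb v w).trans (ha (b v) (b w))
  inv_mem' := by
    intro a ha v w
    simpa [Equiv.Perm.coe_inv, Equiv.apply_symm_apply] using (ha (a⁻¹ v) (a⁻¹ w)).symm

/-- The automorphism group of a graph homomorphism, i.e. the subgroup of
`Aut(Γ₁) × Aut(Γ₂)` of pairs commuting with `f`. -/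
def graphArrowAut {V₁ V₂ : Type*} (Γ₁ : SimpleGraph V₁) (Γ₂ : SimpleGraph V₂)
    (f : V₁ → V₂) : Subgroup (graphAut Γ₁ × graphAut Γ₂) where
  carrier := {p | ∀ v, f ((p.1 : Equiv.Perm V₁) v) = (p.2 : Equiv.Perm V₂) (f v)}
  one_mem' := by intro v; simp
  mul_mem' := by
    intro a b ha hb v
    simp only [Prod.fst_mul, Prod.snd_mul, Subgroup.coe_mul, Equiv.Perm.mul_apply]
    rw [ha ((b.1 : Equiv.Perm V₁) v), hb v]
  inv_mem' := by
    intro a ha v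
    simp only [Prod.fst_inv, Prod.snd_inv, Subgroup.coe_inv]
    have h := ha ((a.1 : Equiv.Perm V₁)⁻¹ v)
    simp only [Equiv.Perm.coe_inv, Equiv.apply_symm_apply] at h
    rw [h]
    simp only [Equiv.Perm.coe_inv, Equiv.symm_apply_apply]

universe u

/-- The outdegree of a vertex in a binary relational system: the cardinality of the
disjoint union over the labels `i ∈ I` of the sets `{w | (v, w) ∈ R_i}`. -/
def relOutDeg {I V : Type u} (R : I → V → V → Prop) (v : V) : Cardinal.{u} :=
  Cardinal.mk (Σ i : I, {w : V // R i v w})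

/-- The indegree of a vertex in a binary relational system: the cardinality of the
disjoint union over the labels `i ∈ I` of the sets `{w | (w, v) ∈ R_i}`. -/
def relInDeg {I V : Type u} (R : I → V → V → Prop) (v : V) : Cardinal.{u} :=
  Cardinal.mk (Σ i : I, {w : V // R i w v})

/-- The degree of a vertex in a binary relational system. -/
def relDeg {I V : Type u} (R : I → V → V → Prop) (v : V) : Cardinal.{u} :=
  relOutDeg R v + relInDeg R v

section Replacement

variable {I V : Type u} (S : I → V → V → Prop)
variable (X : I → Type u) (Gr : ∀ i, SimpleGraph (X i)) (p : ∀ i, X i)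

/-- The vertex set of the replacement graph `Γ(S)`: the vertices of `S` together with, for
each edge `(v, w)` of label `i`, a copy of the vertices of `R_i` (the `some x` vertices)
and an extra vertex `r_i^{(v,w)}` (the `none` vertex). -/
abbrev RepVert (X : I → Type u) := V ⊕ Σ i : I, {e : V × V // S i e.1 e.2} × Option (X i)

/-- The adjacency relation of the replacement graph, consisting of: the edges of each copy
`R_i^{(v,w)}`, and the connecting edges `{v, r_i^{(v,w)}}`, `{r_i^{(v,w)}, p_i^{(v,w)}}` and
`{p_i^{(v,w)}, w}` for each edge `(v, w)` of label `i` of `S`. -/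
inductive RepAdj : RepVert S X → RepVert S X → Prop
  | copy (i : I) (e : {e : V × V // S i e.1 e.2}) {x y : X i} :
      (Gr i).Adj x y → RepAdj (.inr ⟨i, e, some x⟩) (.inr ⟨i, e, some y⟩)
  | rp (i : I) (e : {e : V × V // S i e.1 e.2}) :
      RepAdj (.inr ⟨i, e, none⟩) (.inr ⟨i, e, some (p i)⟩)
  | pr (i : I) (e : {e : V × V // S i e.1 e.2}) :
      RepAdj (.inr ⟨i, e, some (p i)⟩) (.inr ⟨i, e, none⟩)
  | vr (i : I) (e : {e : V × V // S i e.1 e.2}) :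
      RepAdj (.inl e.val.1) (.inr ⟨i, e, none⟩)
  | rv (i : I) (e : {e : V × V // S i e.1 e.2}) :
      RepAdj (.inr ⟨i, e, none⟩) (.inl e.val.1)
  | pw (i : I) (e : {e : V × V // S i e.1 e.2}) :
      RepAdj (.inr ⟨i, e, some (p i)⟩) (.inl e.val.2)
  | wp (i : I) (e : {e : V × V // S i e.1 e.2}) :
      RepAdj (.inl e.val.2) (.inr ⟨i, e, some (p i)⟩)

/-- The replacement graph `Γ(S)` obtained from the `I`-system `S` by the replacement
operation with the family of graphs `(R_i, p_i)`. -/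
def repGraph : SimpleGraph (RepVert S X) where
  Adj := RepAdj S X Gr p
  symm := by
    constructor
    intro a b h
    cases h with
    | copy i e hxy => exact .copy i e ((Gr i).symm.symm _ _ hxy)
    | rp i e => exact .pr i e
    | pr i e => exact .rp i e
    | vr i e => exact .rv i e
    | rv i e => exact .vr i e
    | pw i e => exact .wp i e
    | wp i e => exact .pw i e
  loopless := by
    constructor
    intro a h
    cases h with
    | copy i e hxy => exact (Gr i).loopless.irrefl _ hxy

end Replacement

/-!
Vertices of `Γ(S)` fall into three classes separated by their degrees: the vertices of `S` have
degree in `[4, α]`, the connectors `r_i^{(v,w)}` degree `2`, and the vertices of a copy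
`R_i^{(v,w)}` degree `3` (at `p_i`) or more than `α`; so every automorphism `ψ` preserves the
classes. Each copy is connected and hangs off its connector at `p_i`, so `ψ` maps a copy of
`R_i` onto a copy of some `R_j` by a graph isomorphism; as the `R_i` are rigid and pairwise
non-isomorphic, `j = i` and this isomorphism is the identity. The neighbours of the connector
and of `p_i` then show that the restriction `σ` of `ψ` to `V(S)` maps the edge `(v, w)` to the
edge `(σ v, σ w)`, so `σ ∈ Aut_I(S)` and `ψ` is the canonical lift of `σ`.
-/

open Cardinal

theorem Equiv.Perm.exists_apply_inl_eq_inl {α β : Type*} (ψ : Equiv.Perm (α ⊕ β))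
    (h : ∀ a, ∃ b, ψ (.inl a) = .inl b) (h' : ∀ a, ∃ b, ψ⁻¹ (.inl a) = .inl b) :
    ∃ σ : Equiv.Perm α, ∀ a, ψ (.inl a) = .inl (σ a) := by
  choose f hf using h
  choose g hg using h'
  refine ⟨⟨f, g, fun a => Sum.inl_injective (β := β) ?_, fun b => Sum.inl_injective (β := β) ?_⟩,
    hf⟩
  · rw [← hg, ← hf]
    exact ψ.symm_apply_apply _
  · rw [← hf, ← hg]
    exact ψ.apply_symm_apply _

theorem SimpleGraph.Reachable.induction_on_adj {W : Type*} {G : SimpleGraph W} {P : W → Prop}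
    {u v : W} (huv : G.Reachable u v) (hu : P u) (hP : ∀ a b, G.Adj a b → P a → P b) : P v := by
  obtain ⟨w⟩ := huv
  induction w with
  | nil => exact hu
  | cons hadj _ ih => exact ih (hP _ _ hadj hu)

theorem card_neighborSet_graphAut_apply {W : Type*} {G : SimpleGraph W}
    (ψ : graphAut G) (a : W) : #(G.neighborSet (ψ.1 a)) = #(G.neighborSet a) :=
  Cardinal.mk_congr (SimpleGraph.Iso.mapNeighborSet ⟨ψ.1, (ψ.2 _ _).symm⟩ a).symm

namespace repGraph

variable {I V : Type u} {S : I → V → V → Prop} {X : I → Type u} {Gr : ∀ i, SimpleGraph (X i)}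
  {p : ∀ i, X i}

lemma eq_fst_of_adj_inl_connector {v : V} {i : I} {e : {e : V × V // S i e.1 e.2}}
    (h : (repGraph S X Gr p).Adj (.inl v) (.inr ⟨i, e, none⟩)) : v = e.val.1 := by
  cases h; rfl

lemma eq_snd_of_adj_inl_copy {v : V} {i : I} {e : {e : V × V // S i e.1 e.2}} {x : X i}
    (h : (repGraph S X Gr p).Adj (.inl v) (.inr ⟨i, e, some x⟩)) : v = e.val.2 := by
  cases h; rfl

lemma adj_copy_iff {i : I} {e : {e : V × V // S i e.1 e.2}} {x y : X i} :
    (repGraph S X Gr p).Adj (.inr ⟨i, e, some x⟩) (.inr ⟨i, e, some y⟩) ↔ (Gr i).Adj x y :=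
  ⟨fun h => by cases h; assumption, RepAdj.copy i e⟩

lemma neighborSet_connector (i : I) (e : {e : V × V // S i e.1 e.2}) :
    (repGraph S X Gr p).neighborSet (.inr ⟨i, e, none⟩)
      = {.inl e.val.1, .inr ⟨i, e, some (p i)⟩} := by
  ext a
  constructor
  · intro h
    cases h
    exacts [Or.inr rfl, Or.inl rfl]
  · rintro (rfl | rfl)
    exacts [RepAdj.rv i e, RepAdj.rp i e]

lemma card_neighborSet_connector (i : I) (e : {e : V × V // S i e.1 e.2}) :
    #((repGraph S X Gr p).neighborSet (.inr ⟨i, e, none⟩)) = 2 := by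
  rw [neighborSet_connector, Cardinal.mk_insert (by simp), Cardinal.mk_singleton]
  norm_num

lemma card_neighborSet_port (hp : ∀ i, #((Gr i).neighborSet (p i)) = 1)
    (i : I) (e : {e : V × V // S i e.1 e.2}) :
    #((repGraph S X Gr p).neighborSet (.inr ⟨i, e, some (p i)⟩)) = 3 := by
  let copyVert : X i → RepVert S X := fun y => .inr ⟨i, e, some y⟩
  have hcopy : Function.Injective copyVert := fun y z h => by simpa [copyVert] using h
  have hnbr : (repGraph S X Gr p).neighborSet (.inr ⟨i, e, some (p i)⟩)
      = insert (.inl e.val.2)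
          (insert (.inr ⟨i, e, none⟩) (copyVert '' (Gr i).neighborSet (p i))) := by
    ext a
    constructor
    · intro h
      cases h with
      | copy _ _ hy => exact .inr (.inr ⟨_, hy, rfl⟩)
      | pr => exact .inr (.inl rfl)
      | pw => exact .inl rfl
    · rintro (rfl | rfl | ⟨y, hy, rfl⟩)
      exacts [RepAdj.pw i e, RepAdj.pr i e, RepAdj.copy i e hy]
  rw [hnbr, Cardinal.mk_insert (by simp [copyVert]), Cardinal.mk_insert (by simp [copyVert]),
    Cardinal.mk_image_eq hcopy, hp i]
  norm_num

lemma lt_card_neighborSet_copy {α : Cardinal.{u}}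
    (hbig : ∀ (i : I) (x : X i), x ≠ p i → α < #((Gr i).neighborSet x))
    (i : I) (e : {e : V × V // S i e.1 e.2}) {x : X i} (hx : x ≠ p i) :
    α < #((repGraph S X Gr p).neighborSet (.inr ⟨i, e, some x⟩)) :=
  (hbig i x hx).trans_le <| Cardinal.mk_le_of_injective
    (f := fun y => ⟨.inr ⟨i, e, some y.1⟩, RepAdj.copy i e y.2⟩)
    fun y z h => Subtype.ext (by simpa using congrArg Subtype.val h)

def incidenceMap (S : I → V → V → Prop) (X : I → Type u) (p : ∀ i, X i) (v : V) :
    (Σ i : I, {w : V // S i v w}) ⊕ (Σ i : I, {w : V // S i w v}) → RepVert S X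
  | .inl ⟨i, w, h⟩ => .inr ⟨i, ⟨(v, w), h⟩, none⟩
  | .inr ⟨i, w, h⟩ => .inr ⟨i, ⟨(w, v), h⟩, some (p i)⟩

lemma incidenceMap_injective (v : V) : Function.Injective (incidenceMap S X p v) := by
  rintro (⟨i, w, h⟩ | ⟨i, w, h⟩) (⟨j, u, g⟩ | ⟨j, u, g⟩) huw <;>
    simp only [incidenceMap, Sum.inr.injEq, Sigma.mk.inj_iff] at huw <;>
    obtain ⟨rfl, huw⟩ := huw <;> simp_all

lemma range_incidenceMap (v : V) :
    Set.range (incidenceMap S X p v) = (repGraph S X Gr p).neighborSet (.inl v) := by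
  ext a
  constructor
  · rintro ⟨⟨i, w, h⟩ | ⟨i, w, h⟩, rfl⟩
    exacts [RepAdj.vr i ⟨(v, w), h⟩, RepAdj.wp i ⟨(w, v), h⟩]
  · intro h
    cases h with
    | vr i e => exact ⟨.inl ⟨i, e.val.2, e.2⟩, rfl⟩
    | wp i e => exact ⟨.inr ⟨i, e.val.1, e.2⟩, rfl⟩

lemma card_neighborSet_inl (v : V) :
    #((repGraph S X Gr p).neighborSet (.inl v)) = relDeg S v := by
  rw [← range_incidenceMap, Cardinal.mk_range_eq _ (incidenceMap_injective v), relDeg,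
    relOutDeg, relInDeg, Cardinal.add_def]

/-- Vertices of `S`, the vertices `r_i^{(v,w)}`, and the vertices of the copies `R_i^{(v,w)}`. -/
inductive VertexKind
  | original
  | connector
  | copy

def vertexKind : RepVert S X → VertexKind
  | .inl _ => .original
  | .inr ⟨_, _, none⟩ => .connector
  | .inr ⟨_, _, some _⟩ => .copy

lemma vertexKind_eq_original_iff {a : RepVert S X} :
    vertexKind a = .original ↔ ∃ v, a = .inl v := by
  refine ⟨fun h => ?_, by rintro ⟨v, rfl⟩; rfl⟩
  rcases a with v | ⟨i, e, _ | x⟩ <;> first | exact ⟨_, rfl⟩ | cases h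

lemma vertexKind_eq_connector_iff {a : RepVert S X} :
    vertexKind a = .connector ↔ ∃ i e, a = .inr ⟨i, e, none⟩ := by
  refine ⟨fun h => ?_, by rintro ⟨i, e, rfl⟩; rfl⟩
  rcases a with v | ⟨i, e, _ | x⟩ <;> first | exact ⟨_, _, rfl⟩ | cases h

lemma vertexKind_eq_copy_iff {a : RepVert S X} :
    vertexKind a = .copy ↔ ∃ i e x, a = .inr ⟨i, e, some x⟩ := by
  refine ⟨fun h => ?_, by rintro ⟨i, e, x, rfl⟩; rfl⟩
  rcases a with v | ⟨i, e, _ | x⟩ <;> first | exact ⟨_, _, _, rfl⟩ | cases h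

/-- Connectors have degree `2`, vertices of `S` degree in `[4, α]`, and copy vertices degree `3`
(at `p_i`) or more than `α`. -/
noncomputable def kindOfDegree (α c : Cardinal) : VertexKind := by
  classical
  exact if c = 2 then .connector else if 4 ≤ c ∧ c ≤ α then .original else .copy

lemma kindOfDegree_card_neighborSet {α : Cardinal.{u}} (hα : 4 ≤ α)
    (hp : ∀ i, #((Gr i).neighborSet (p i)) = 1)
    (hbig : ∀ (i : I) (x : X i), x ≠ p i → α < #((Gr i).neighborSet x))
    (hdeg : ∀ v : V, 4 ≤ relDeg S v ∧ relDeg S v ≤ α) (a : RepVert S X) :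
    kindOfDegree α #((repGraph S X Gr p).neighborSet a) = vertexKind a := by
  rcases a with v | ⟨i, e, _ | x⟩
  · have h2 : relDeg S v ≠ 2 := fun h => absurd (h ▸ (hdeg v).1) (by norm_num)
    simp [kindOfDegree, vertexKind, card_neighborSet_inl, h2, hdeg v]
  · simp [kindOfDegree, vertexKind, card_neighborSet_connector]
  · by_cases hx : x = p i
    · subst hx
      rw [card_neighborSet_port hp, kindOfDegree, if_neg (by norm_num),
        if_neg fun h => absurd h.1 (by norm_num)]
      rfl
    · have hlt := lt_card_neighborSet_copy (S := S) (e := e) hbig i hx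
      have h2 : #((repGraph S X Gr p).neighborSet (.inr ⟨i, e, some x⟩)) ≠ 2 :=
        fun h => by rw [h] at hlt; exact absurd (hα.trans_lt hlt) (by norm_num)
      simp [kindOfDegree, vertexKind, h2, hlt.not_ge]

def AutPreservesVertexKind (S : I → V → V → Prop) (Gr : ∀ i, SimpleGraph (X i))
    (p : ∀ i, X i) : Prop :=
  ∀ (ψ : graphAut (repGraph S X Gr p)) (a : RepVert S X), vertexKind (ψ.1 a) = vertexKind a

lemma autPreservesVertexKind {α : Cardinal.{u}} (hα : 4 ≤ α)
    (hp : ∀ i, #((Gr i).neighborSet (p i)) = 1)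
    (hbig : ∀ (i : I) (x : X i), x ≠ p i → α < #((Gr i).neighborSet x))
    (hdeg : ∀ v : V, 4 ≤ relDeg S v ∧ relDeg S v ≤ α) : AutPreservesVertexKind S Gr p := by
  intro ψ a
  rw [← kindOfDegree_card_neighborSet hα hp hbig hdeg, card_neighborSet_graphAut_apply,
    kindOfDegree_card_neighborSet hα hp hbig hdeg]

lemma exists_eq_copy_of_adj {j : I} {f : {e : V × V // S j e.1 e.2}} {o : Option (X j)}
    {b : RepVert S X} (hb : vertexKind b = .copy)
    (h : (repGraph S X Gr p).Adj (.inr ⟨j, f, o⟩) b) : ∃ y, b = .inr ⟨j, f, some y⟩ := by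
  obtain ⟨j', f', y, rfl⟩ := vertexKind_eq_copy_iff.1 hb
  cases h <;> exact ⟨_, rfl⟩

def edgePerm (σ : relAut S) (i : I) : Equiv.Perm {e : V × V // S i e.1 e.2} :=
  (σ.1.prodCongr σ.1).subtypeEquiv fun e => σ.2 i e.1 e.2

variable (X) in
def liftPerm : relAut S →* Equiv.Perm (RepVert S X) where
  toFun σ := σ.1.sumCongr (Equiv.sigmaCongrRight fun i => (edgePerm σ i).prodCongr (.refl _))
  map_one' := by ext (_ | _) <;> rfl
  map_mul' _ _ := by ext (_ | _) <;> rfl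

lemma adj_liftPerm (σ : relAut S) {a b : RepVert S X} (h : (repGraph S X Gr p).Adj a b) :
    (repGraph S X Gr p).Adj (liftPerm X σ a) (liftPerm X σ b) := by
  cases h with
  | copy i e hxy => exact RepAdj.copy i _ hxy
  | rp i e => exact RepAdj.rp i _
  | pr i e => exact RepAdj.pr i _
  | vr i e => exact RepAdj.vr i (edgePerm σ i e)
  | rv i e => exact RepAdj.rv i (edgePerm σ i e)
  | pw i e => exact RepAdj.pw i (edgePerm σ i e)
  | wp i e => exact RepAdj.wp i (edgePerm σ i e)

lemma liftPerm_mem_graphAut (σ : relAut S) : liftPerm X σ ∈ graphAut (repGraph S X Gr p) :=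
  fun _ _ => ⟨adj_liftPerm σ, fun h => by simpa using adj_liftPerm σ⁻¹ h⟩

variable (Gr p) in
def liftHom : relAut S →* graphAut (repGraph S X Gr p) :=
  (liftPerm X).codRestrict _ liftPerm_mem_graphAut

lemma liftHom_injective : Function.Injective (liftHom (S := S) Gr p) := fun _ _ h =>
  Subtype.ext <| Equiv.ext fun v =>
    Sum.inl.inj (congrArg (fun ψ : graphAut (repGraph S X Gr p) => ψ.1 (.inl v)) h)

section Gadget

variable (hkind : AutPreservesVertexKind S Gr p)
include hkind

lemma exists_perm_apply_inl (ψ : graphAut (repGraph S X Gr p)) :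
    ∃ σ : Equiv.Perm V, ∀ v, ψ.1 (.inl v) = .inl (σ v) :=
  ψ.1.exists_apply_inl_eq_inl (fun _ => vertexKind_eq_original_iff.1 (hkind ψ _))
    (fun _ => vertexKind_eq_original_iff.1 (hkind ψ⁻¹ _))

variable (hconn : ∀ i, (Gr i).Connected) (ψ : graphAut (repGraph S X Gr p))
include hconn

lemma exists_apply_copy_eq {i j : I} {e : {e : V × V // S i e.1 e.2}}
    {f : {e : V × V // S j e.1 e.2}} (hr : ψ.1 (.inr ⟨i, e, none⟩) = .inr ⟨j, f, none⟩)
    (x : X i) : ∃ y, ψ.1 (.inr ⟨i, e, some x⟩) = .inr ⟨j, f, some y⟩ := by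
  have hcopy : ∀ x, vertexKind (ψ.1 (.inr ⟨i, e, some x⟩)) = .copy := fun x => hkind ψ _
  refine ((hconn i).preconnected (p i) x).induction_on_adj
    (P := fun x => ∃ y, ψ.1 (.inr ⟨i, e, some x⟩) = .inr ⟨j, f, some y⟩) ?_
    fun a b hab ⟨y, hy⟩ => ?_
  · exact exists_eq_copy_of_adj (hcopy _) (hr ▸ (ψ.2 _ _).1 (RepAdj.rp i e))
  · exact exists_eq_copy_of_adj (hcopy b) (hy ▸ (ψ.2 _ _).1 (RepAdj.copy i e hab))

lemma exists_iso_of_apply_connector {i j : I} {e : {e : V × V // S i e.1 e.2}}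
    {f : {e : V × V // S j e.1 e.2}} (hr : ψ.1 (.inr ⟨i, e, none⟩) = .inr ⟨j, f, none⟩) :
    ∃ φ : Gr i ≃g Gr j, ∀ x, ψ.1 (.inr ⟨i, e, some x⟩) = .inr ⟨j, f, some (φ x)⟩ := by
  have hr' : (ψ⁻¹).1 (.inr ⟨j, f, none⟩) = .inr ⟨i, e, none⟩ := by
    rw [← hr]
    exact ψ.1.symm_apply_apply _
  choose φ hφ using exists_apply_copy_eq hkind hconn ψ hr
  choose φ' hφ' using exists_apply_copy_eq hkind hconn ψ⁻¹ hr'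
  have copy_inj : ∀ {k : I} {g : {e : V × V // S k e.1 e.2}} {x y : X k},
      (.inr ⟨k, g, some x⟩ : RepVert S X) = .inr ⟨k, g, some y⟩ → x = y := by simp
  refine ⟨⟨⟨φ, φ', fun x => copy_inj (g := e) ?_, fun y => copy_inj (g := f) ?_⟩,
    fun {a b} => ?_⟩, hφ⟩
  · rw [← hφ', ← hφ]
    exact ψ.1.symm_apply_apply _
  · rw [← hφ, ← hφ']
    exact ψ.1.apply_symm_apply _
  · rw [Equiv.coe_fn_mk, ← adj_copy_iff (e := f), ← hφ, ← hφ, ← ψ.2, adj_copy_iff]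

variable (hrigid : ∀ (i : I) (φ : Gr i ≃g Gr i) (x : X i), φ x = x)
  (hdist : ∀ i j : I, i ≠ j → IsEmpty (Gr i ≃g Gr j))
include hrigid hdist

lemma exists_apply_gadget_eq (i : I) (e : {e : V × V // S i e.1 e.2}) :
    ∃ f : {e : V × V // S i e.1 e.2}, ∀ o, ψ.1 (.inr ⟨i, e, o⟩) = .inr ⟨i, f, o⟩ := by
  obtain ⟨j, f, hr⟩ := vertexKind_eq_connector_iff.1 (hkind ψ (.inr ⟨i, e, none⟩))
  obtain ⟨φ, hφ⟩ := exists_iso_of_apply_connector hkind hconn ψ hr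
  obtain rfl : i = j := by_contra fun hij => (hdist i j hij).false φ
  refine ⟨f, fun o => ?_⟩
  cases o with
  | none => exact hr
  | some x => rw [hφ, hrigid i φ x]

lemma exists_apply_inr_eq {σ : V → V} (hσ : ∀ v, ψ.1 (.inl v) = .inl (σ v)) (i : I)
    (e : {e : V × V // S i e.1 e.2}) :
    ∃ h : S i (σ e.val.1) (σ e.val.2),
      ∀ o, ψ.1 (.inr ⟨i, e, o⟩) = .inr ⟨i, ⟨(σ e.val.1, σ e.val.2), h⟩, o⟩ := by
  obtain ⟨⟨⟨a, b⟩, hab⟩, hf⟩ := exists_apply_gadget_eq hkind hconn ψ hrigid hdist i e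
  have ha : σ e.val.1 = a := eq_fst_of_adj_inl_connector <| by
    rw [← hσ, ← hf]
    exact (ψ.2 _ _).1 (RepAdj.vr i e)
  have hb : σ e.val.2 = b := eq_snd_of_adj_inl_copy (x := p i) <| by
    rw [← hσ, ← hf]
    exact (ψ.2 _ _).1 (RepAdj.wp i e)
  subst ha hb
  exact ⟨hab, hf⟩

lemma liftHom_surjective : Function.Surjective (liftHom (S := S) Gr p) := by
  intro ψ
  obtain ⟨σ, hσ⟩ := exists_perm_apply_inl hkind ψ
  have hσinv : ∀ v, (ψ⁻¹).1 (.inl v) = .inl (σ⁻¹ v) := fun v =>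
    Equiv.Perm.inv_eq_iff_eq.2 (by rw [hσ]; exact congrArg _ (σ.apply_symm_apply v).symm)
  have hS : ∀ i v w, S i v w → S i (σ v) (σ w) := fun i v w h =>
    (exists_apply_inr_eq hkind hconn ψ hrigid hdist hσ i ⟨(v, w), h⟩).fst
  have hS' : ∀ i v w, S i (σ v) (σ w) → S i v w := fun i v w h => by
    simpa using
      (exists_apply_inr_eq hkind hconn ψ⁻¹ hrigid hdist hσinv i ⟨(σ v, σ w), h⟩).fst
  refine ⟨⟨σ, fun i v w => ⟨hS i v w, hS' i v w⟩⟩, Subtype.ext (Equiv.ext ?_)⟩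
  rintro (v | ⟨i, e, o⟩)
  · exact (hσ v).symm
  · exact ((exists_apply_inr_eq hkind hconn ψ hrigid hdist hσ i e).snd o).symm

end Gadget

end repGraph

/-- **Replacement.** Under the replacement hypotheses, every automorphism `ψ` of the
replacement graph `Γ(S)` maps `V(S)` onto itself, its restriction to `V(S)` is an
automorphism of the `I`-system `S`, `ψ` is completely determined by this restriction, and
the restriction map is a group isomorphism `Aut(Γ(S)) ≅ Aut_I(S)`. -/
theorem replacement_graph_automorphisms {I V : Type u} (S : I → V → V → Prop)
    (X : I → Type u) (Gr : ∀ i, SimpleGraph (X i)) (p : ∀ i, X i)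
    (α : Cardinal.{u}) (hα : 4 ≤ α)
    (hconn : ∀ i, (Gr i).Connected)
    (hp : ∀ i, Cardinal.mk ((Gr i).neighborSet (p i)) = 1)
    (hbig : ∀ (i : I) (x : X i), x ≠ p i → α < Cardinal.mk ((Gr i).neighborSet x))
    (hrigid : ∀ (i : I) (φ : Gr i ≃g Gr i) (x : X i), φ x = x)
    (hdist : ∀ i j : I, i ≠ j → IsEmpty (Gr i ≃g Gr j))
    (hdeg : ∀ v : V, 4 ≤ relDeg S v ∧ relDeg S v ≤ α) :
    (∀ (ψ : graphAut (repGraph S X Gr p)) (v : V),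
        ∃ w : V, (ψ : Equiv.Perm (RepVert S X)) (Sum.inl v) = Sum.inl w) ∧
    (∀ ψ₁ ψ₂ : graphAut (repGraph S X Gr p),
        (∀ v : V, (ψ₁ : Equiv.Perm (RepVert S X)) (Sum.inl v)
          = (ψ₂ : Equiv.Perm (RepVert S X)) (Sum.inl v)) → ψ₁ = ψ₂) ∧
    ∃ F : graphAut (repGraph S X Gr p) ≃* relAut S,
      ∀ (ψ : graphAut (repGraph S X Gr p)) (v : V),
        (ψ : Equiv.Perm (RepVert S X)) (Sum.inl v)
          = Sum.inl (((F ψ : relAut S) : Equiv.Perm V) v) := by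
  have hkind := repGraph.autPreservesVertexKind hα hp hbig hdeg
  let F := (MulEquiv.ofBijective (repGraph.liftHom Gr p)
    ⟨repGraph.liftHom_injective, repGraph.liftHom_surjective hkind hconn hrigid hdist⟩).symm
  -- `F.symm` is the lift, which acts on `V(S)` by the automorphism of `S` itself.
  have hF : ∀ (ψ : graphAut (repGraph S X Gr p)) v, ψ.1 (.inl v) = .inl ((F ψ).1 v) :=
    fun ψ v => congrArg (fun χ : graphAut _ => χ.1 (.inl v)) (F.symm_apply_apply ψ).symm
  refine ⟨fun ψ v => ⟨_, hF ψ v⟩, fun ψ₁ ψ₂ h => F.injective ?_, F, hF⟩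
  exact Subtype.ext <| Equiv.ext fun v =>
    Sum.inl.inj ((hF ψ₁ v).symm.trans ((h v).trans (hF ψ₂ v)))
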